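/- arXiv:2410.05567 — 3 statements merged into one kernel-verified Lean document; each statement's English description precedes it below -/
import Mathlib

section
/- Uniform bound on the coordinates of the self-normalized error (Supplementary Lemma): In the error setup, let v = ε/‖ε‖₂ with coordinates v_1,…,v_n, and let c > 0 be a constant such that P(√n·|v_i| ≥ t) ≤ 4·exp(−c·λ_min(V)·t²) for every i and every t > 0 (such c, depending only on K_w, V_lo, V_up, exists). Then P(there exists i ∈ {1,…,n} with |v_i| > √(3/(2c·λ_min(V)))·√(log n / n)) ≤ 4/√n. -/
/-!
Union bound: with `A = 3 / (2 c λ_min(V))` and `t = √(A log n)`, the tail estimate at `t` gives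
each coordinate probability at most `4 exp(-(3/2) log n) = 4 n^(-3/2)`, and summing over the `n`
coordinates gives `4 / √n`. The tail estimate applies since `t > 0`, which needs `λ_min(V) > 0`: for
positive definite `V` the Rayleigh quotient attains a positive minimum on the compact unit sphere.
For `n = 1` the bound `4` is trivial.
-/

open MeasureTheory ProbabilityTheory Matrix Filter

/-- Sub-Gaussian norm `‖A‖_{ψ₂} = inf {t > 0 : E[exp(A²/t²)] ≤ 2}`. -/
noncomputable def subGaussianNorm {Ω : Type*} [MeasurableSpace Ω] (μ : Measure Ω)
    (A : Ω → ℝ) : ℝ :=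
  sInf {t : ℝ | 0 < t ∧ ∫ ω, Real.exp (A ω ^ 2 / t ^ 2) ∂μ ≤ 2}

/-- Smallest eigenvalue of a (symmetric) matrix, via the Rayleigh quotient. -/
noncomputable def lamMin {n : ℕ} (M : Matrix (Fin n) (Fin n) ℝ) : ℝ :=
  ⨅ x : {x : Fin n → ℝ // ∑ i, (x i) ^ 2 = 1}, x.1 ⬝ᵥ M.mulVec x.1

/-- The square root of a positive semidefinite matrix, as `Matrix.PosSemidef.sqrt` was defined
in the older Mathlib (removed since). -/
noncomputable def Matrix.PosSemidef.sqrt {n : Type*} [Fintype n] [DecidableEq n]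
    {A : Matrix n n ℝ} (hA : A.PosSemidef) : Matrix n n ℝ :=
  hA.1.eigenvectorUnitary.1 * diagonal ((↑) ∘ (Real.sqrt ·) ∘ hA.1.eigenvalues) *
    (star hA.1.eigenvectorUnitary : Matrix n n ℝ)

lemma isCompact_setOf_sum_sq_eq_one (ι : Type*) [Fintype ι] :
    IsCompact {x : ι → ℝ | ∑ i, x i ^ 2 = 1} := by
  refine (isCompact_closedBall (0 : ι → ℝ) 1).of_isClosed_subset
    (isClosed_eq (by fun_prop) continuous_const) fun x hx => ?_
  rw [Metric.mem_closedBall, dist_zero_right, pi_norm_le_iff_of_nonneg zero_le_one]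
  intro i
  rw [Real.norm_eq_abs, ← sq_le_one_iff_abs_le_one, ← hx]
  exact Finset.single_le_sum (f := fun j => x j ^ 2) (fun j _ => sq_nonneg _) (Finset.mem_univ i)

lemma lamMin_pos {n : ℕ} [NeZero n] {V : Matrix (Fin n) (Fin n) ℝ} (hV : V.PosDef) :
    0 < lamMin V := by
  have hbasis : ∑ i, (Pi.single 0 1 : Fin n → ℝ) i ^ 2 = 1 := by
    rw [Fintype.sum_eq_single 0 fun i hi => by simp [hi]]
    simp
  obtain ⟨x₀, hx₀, hmin⟩ := (isCompact_setOf_sum_sq_eq_one (Fin n)).exists_isMinOn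
    ⟨_, hbasis⟩ (f := fun x => x ⬝ᵥ V *ᵥ x) (by fun_prop)
  have hx₀_ne : x₀ ≠ 0 := by
    rintro rfl
    simp at hx₀
  have : Nonempty {x : Fin n → ℝ // ∑ i, x i ^ 2 = 1} := ⟨⟨_, hbasis⟩⟩
  exact (hV.dotProduct_mulVec_pos hx₀_ne).trans_le (le_ciInf fun x => hmin x.2)

lemma measureReal_exists_lt_le {Ω ι : Type*} [MeasurableSpace Ω] [Fintype ι] (μ : Measure Ω)
    [IsFiniteMeasure μ] (f : ι → Ω → ℝ) {a b : ℝ} (h : ∀ i, μ.real {ω | a ≤ f i ω} ≤ b) :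
    μ.real {ω | ∃ i, a < f i ω} ≤ Fintype.card ι * b := by
  calc μ.real {ω | ∃ i, a < f i ω} ≤ μ.real (⋃ i, {ω | a ≤ f i ω}) :=
        measureReal_mono fun ω ⟨i, hi⟩ => Set.mem_iUnion.2 ⟨i, hi.le⟩
    _ ≤ ∑ i, μ.real {ω | a ≤ f i ω} := measureReal_iUnion_fintype_le _
    _ ≤ Fintype.card ι * b := by
        simpa using Finset.sum_le_sum fun i (_ : i ∈ Finset.univ) => h i

lemma natCast_mul_exp_neg_three_halves_mul_log {n : ℕ} (hn : 0 < n) :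
    n * Real.exp (-(3 / 2) * Real.log n) = 1 / Real.sqrt n := by
  have hn' : (0 : ℝ) < n := by exact_mod_cast hn
  rw [mul_comm (-(3 / 2) : ℝ), ← Real.rpow_def_of_pos hn', Real.sqrt_eq_rpow,
    ← Real.rpow_one_add' hn'.le (by norm_num), one_div, ← Real.rpow_neg hn'.le]
  norm_num

theorem selfnormalized_error_uniform_bound_general
    (n : ℕ) (hn : 1 ≤ n)
    (Ω : Type) (mΩ : MeasurableSpace Ω) (μ : Measure Ω) (hμ : IsProbabilityMeasure μ)
    (V : Matrix (Fin n) (Fin n) ℝ) (hV : V.PosDef)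
    (v : Ω → Fin n → ℝ)
    -- a constant `c > 0` satisfying the tail bound of Lemma A.1
    (c : ℝ) (hc : 0 < c)
    (htail : ∀ (i : Fin n) (t : ℝ), 0 < t →
      (μ {ω | t ≤ Real.sqrt n * |v ω i|}).toReal ≤ 4 * Real.exp (-c * lamMin V * t ^ 2)) :
    (μ {ω | ∃ i : Fin n,
        Real.sqrt (3 / (2 * c * lamMin V)) * Real.sqrt (Real.log n / n) < |v ω i|}).toReal ≤
      4 / Real.sqrt n := by
  have hlam : 0 < lamMin V := by
    have : NeZero n := ⟨by omega⟩
    exact lamMin_pos hV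
  obtain rfl | hn2 := hn.eq_or_lt
  · calc μ.real _ ≤ 1 := measureReal_le_one
      _ ≤ 4 / Real.sqrt (1 : ℕ) := by norm_num
  have hlog : 0 < Real.log n := Real.log_pos (by exact_mod_cast hn2)
  set A := 3 / (2 * c * lamMin V) with hA
  set t := Real.sqrt n * (Real.sqrt A * Real.sqrt (Real.log n / n))
  have ht : 0 < t := by positivity
  have hexponent : -c * lamMin V * t ^ 2 = -(3 / 2) * Real.log n := by
    have hn0 : (0 : ℝ) < n := by positivity
    rw [mul_pow, mul_pow, Real.sq_sqrt hn0.le, Real.sq_sqrt (by positivity),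
      Real.sq_sqrt (by positivity), hA]
    field_simp
  calc μ.real {ω | ∃ i, Real.sqrt A * Real.sqrt (Real.log n / n) < |v ω i|}
      ≤ μ.real {ω | ∃ i, t < Real.sqrt n * |v ω i|} := by
        refine measureReal_mono fun ω ⟨i, hi⟩ => ⟨i, ?_⟩
        exact mul_lt_mul_of_pos_left hi (by positivity)
    _ ≤ n * (4 * Real.exp (-c * lamMin V * t ^ 2)) := by
        simpa using measureReal_exists_lt_le μ (fun i ω => Real.sqrt n * |v ω i|)
          fun i => htail i t ht
    _ = 4 / Real.sqrt n := by
        rw [hexponent, mul_left_comm, natCast_mul_exp_neg_three_halves_mul_log (by omega)]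
        ring

/-- **Supplementary Lemma (uniform bound on the coordinates of the self-normalized
error vector `v = ε/‖ε‖₂`).** -/
theorem selfnormalized_error_uniform_bound
    (Kw Vlo Vup : ℝ) (hKw : 0 < Kw) (hVlo : 0 < Vlo) (hVloup : Vlo ≤ Vup)
    (n : ℕ) (hn : 1 ≤ n)
    (Ω : Type) (mΩ : MeasurableSpace Ω) (μ : Measure Ω) (hμ : IsProbabilityMeasure μ)
    (σ : ℝ) (hσ : 0 < σ)
    (V : Matrix (Fin n) (Fin n) ℝ) (hV : V.PosDef) (htr : V.trace = (n : ℝ))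
    (w : Ω → Fin n → ℝ) (hwm : Measurable w)
    (hwindep : iIndepFun (fun i ω => w ω i) μ)
    (hwmean : ∀ i, ∫ ω, w ω i ∂μ = 0)
    (hwvar : ∀ i, ∫ ω, (w ω i) ^ 2 ∂μ = 1)
    (hwsubG : ∀ i, subGaussianNorm μ (fun ω => w ω i) ≤ Kw)
    (ε : Ω → Fin n → ℝ) (hε : ∀ ω, ε ω = σ • (hV.posSemidef.sqrt.mulVec (w ω)))
    (hdiag : ∀ i, Vlo ≤ σ ^ 2 * V i i ∧ σ ^ 2 * V i i ≤ Vup)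
    (hne : μ {ω | ε ω = 0} = 0)
    (v : Ω → Fin n → ℝ)
    (hv : ∀ ω i, v ω i = ε ω i / Real.sqrt (∑ i', (ε ω i') ^ 2))
    -- a constant `c > 0` satisfying the tail bound of Lemma A.1
    (c : ℝ) (hc : 0 < c)
    (htail : ∀ (i : Fin n) (t : ℝ), 0 < t →
      (μ {ω | t ≤ Real.sqrt n * |v ω i|}).toReal ≤ 4 * Real.exp (-c * lamMin V * t ^ 2)) :
    (μ {ω | ∃ i : Fin n,
        Real.sqrt (3 / (2 * c * lamMin V)) * Real.sqrt (Real.log n / n) < |v ω i|}).toReal ≤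
      4 / Real.sqrt n :=
  selfnormalized_error_uniform_bound_general n hn Ω mΩ μ hμ V hV v c hc htail
end

section
/- Concentration of the block-diagonal Gaussian quadratic form (Supplementary Lemma): Let K ≥ 1 be a fixed integer, let ρ_1,…,ρ_K ∈ [0,1), let r_1,…,r_K ∈ (0,1] with Σ_{k=1}^K r_k = 1, and let the block sizes n_1,…,n_K ≥ 1 satisfy Σ_{k=1}^K n_k = n and |n_k/n − r_k| ≤ 1/√n for all k. Let Λ' = diag{(1−ρ_1)·I_{n_1}, …, (1−ρ_K)·I_{n_K}} ∈ ℝ^{n×n} and let w ~ N(0, I_n). If n ≥ (4/min_{1≤k≤K} r_k)², then P(|wᵀΛ'w/n − Σ_{k=1}^K r_k(1−ρ_k)| > (1/2)·Σ_{k=1}^K r_k(1−ρ_k)) ≤ 2K·exp(−c̃₆·(min_{1≤k≤K} r_k)·n), where c̃₆ > 0 is an absolute constant. -/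
open MeasureTheory ProbabilityTheory Matrix Filter
open scoped ENNReal NNReal

private theorem comp_eq_aux {n : ℕ} (f : Fin (n+1) → ℝ → ℝ) (p : ℝ × (Fin n → ℝ)) :
    ∏ i, f i ((MeasurableEquiv.piFinSuccAbove (fun _ : Fin (n+1) => ℝ) 0).symm p i) =
    f 0 p.1 * ∏ i, f (Fin.succ i) (p.2 i) := by
  simp [MeasurableEquiv.piFinSuccAbove_symm_apply, Fin.prod_univ_succ, Fin.insertNthEquiv,
    Fin.insertNth_zero, Fin.zero_succAbove]

private theorem pi_integrable_prod {γ : Measure ℝ} [IsProbabilityMeasure γ] :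
    ∀ {n : ℕ} {f : Fin n → ℝ → ℝ}, (∀ i, Integrable (f i) γ) →
    Integrable (fun x : Fin n → ℝ => ∏ i, f i (x i)) (Measure.pi fun _ => γ) := by
  intro n
  induction n with
  | zero =>
      intro f _
      have : (fun x : Fin 0 → ℝ => ∏ i, f i (x i)) = fun _ => 1 := by
        funext x; simp
      rw [this]
      exact integrable_const 1
  | succ n ih =>
      intro f hf
      have hmp := (measurePreserving_piFinSuccAbove (fun _ : Fin (n+1) => γ) 0).symm
      rw [← hmp.integrable_comp_emb (MeasurableEquiv.measurableEmbedding _)]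
      simp only [Function.comp_def, comp_eq_aux f]
      exact Integrable.mul_prod (hf 0) (ih (fun i => hf _))

private theorem pi_integral_prod {γ : Measure ℝ} [IsProbabilityMeasure γ] :
    ∀ {n : ℕ} (f : Fin n → ℝ → ℝ),
    ∫ x : Fin n → ℝ, ∏ i, f i (x i) ∂(Measure.pi fun _ => γ) = ∏ i, ∫ x, f i x ∂γ := by
  intro n
  induction n with
  | zero => intro f; simp
  | succ n ih =>
      intro f
      calc
        _ = ∫ x : ℝ × (Fin n → ℝ),
            f 0 x.1 * ∏ i : Fin n, f (Fin.succ i) (x.2 i)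
            ∂(γ.prod (Measure.pi fun _ => γ)) := by
          rw [← ((measurePreserving_piFinSuccAbove
            (fun _ : Fin (n+1) => γ) 0).symm).integral_comp']
          simp_rw [comp_eq_aux f]
        _ = (∫ x, f 0 x ∂γ) * ∏ i : Fin n, ∫ x, f (Fin.succ i) x ∂γ := by
          rw [← ih, ← integral_prod_mul]
        _ = ∏ i, ∫ x, f i x ∂γ := by rw [Fin.prod_univ_succ]


private theorem gaussian_mgf_sq {θ : ℝ} (hθ : θ < 1/2) :
    Integrable (fun x => Real.exp (θ * x ^ 2)) (gaussianReal 0 1) ∧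
      ∫ x, Real.exp (θ * x ^ 2) ∂(gaussianReal 0 1) = (Real.sqrt (1 - 2 * θ))⁻¹ := by
  have hβ : (0:ℝ) < 1/2 - θ := by linarith
  have hpdf_meas : Measurable fun x => (gaussianPDFReal 0 1 x).toNNReal :=
    (measurable_gaussianPDFReal 0 1).real_toNNReal
  have hgr : gaussianReal 0 1
      = (volume : Measure ℝ).withDensity (fun x => ((gaussianPDFReal 0 1 x).toNNReal : ℝ≥0∞)) := by
    rw [gaussianReal_of_var_ne_zero 0 one_ne_zero]
    rfl
  have hpt : ∀ x : ℝ, (gaussianPDFReal 0 1 x).toNNReal • Real.exp (θ * x ^ 2)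
      = (Real.sqrt (2 * Real.pi))⁻¹ * Real.exp (-(1/2 - θ) * x ^ 2) := by
    intro x
    rw [NNReal.smul_def, smul_eq_mul, Real.coe_toNNReal _ (gaussianPDFReal_nonneg 0 1 x)]
    unfold gaussianPDFReal
    rw [mul_assoc, ← Real.exp_add]
    push_cast
    ring_nf
  constructor
  · rw [hgr, integrable_withDensity_iff_integrable_smul hpdf_meas]
    have : Integrable (fun x : ℝ => (Real.sqrt (2 * Real.pi))⁻¹
        * Real.exp (-(1/2 - θ) * x ^ 2)) volume :=
      (integrable_exp_neg_mul_sq hβ).const_mul _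
    exact this.congr (ae_of_all _ fun x => (hpt x).symm)
  · rw [hgr, integral_withDensity_eq_integral_smul hpdf_meas]
    simp_rw [hpt]
    rw [MeasureTheory.integral_const_mul, integral_gaussian]
    have hs : Real.sqrt (Real.pi / (1/2 - θ))
        = Real.sqrt (2 * Real.pi) * (Real.sqrt (1 - 2*θ))⁻¹ := by
      rw [← Real.sqrt_inv, ← Real.sqrt_mul (by positivity)]
      congr 1
      field_simp
    rw [hs]
    have h2π : (0:ℝ) < Real.sqrt (2 * Real.pi) := Real.sqrt_pos.2 (by positivity)
    field_simp
private theorem chernoff_tail {n : ℕ} (s : Finset (Fin n)) {θ : ℝ} (hθ : θ < 1/2) (c : ℝ) :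
    ((Measure.pi fun _ : Fin n => gaussianReal 0 1)
        {x | c ≤ θ * ∑ i ∈ s, x i ^ 2}).toReal
      ≤ Real.exp (-c) * Real.exp (-(s.card : ℝ) / 2 * Real.log (1 - 2 * θ)) := by
  classical
  set γ := gaussianReal 0 1 with hγ
  set ν := (Measure.pi fun _ : Fin n => γ) with hν
  have hg := gaussian_mgf_sq hθ
  set M := (Real.sqrt (1 - 2 * θ))⁻¹ with hM
  set g : Fin n → ℝ → ℝ := fun i y => if i ∈ s then Real.exp (θ * y ^ 2) else 1 with hgdef
  have hprod : ∀ x : Fin n → ℝ, Real.exp (θ * ∑ i ∈ s, x i ^ 2) = ∏ i, g i (x i) := by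
    intro x
    rw [Finset.mul_sum, Real.exp_sum, hgdef]
    simp only []
    rw [Finset.prod_ite_mem Finset.univ s, Finset.univ_inter]
  have hgint : ∀ i, Integrable (g i) γ := by
    intro i
    by_cases h : i ∈ s <;> simp only [hgdef, h, if_true, if_false]
    · exact hg.1
    · exact integrable_const 1
  have hFint : Integrable (fun x : Fin n → ℝ => Real.exp (θ * ∑ i ∈ s, x i ^ 2)) ν := by
    simp_rw [hprod]
    exact pi_integrable_prod hgint
  have hFval : ∫ x, Real.exp (θ * ∑ i ∈ s, x i ^ 2) ∂ν = M ^ s.card := by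
    simp_rw [hprod]
    rw [pi_integral_prod]
    have hgi : ∀ i, ∫ y, g i y ∂γ = if i ∈ s then M else 1 := by
      intro i
      by_cases h : i ∈ s <;> simp only [hgdef, h, if_true, if_false]
      · exact hg.2
      · simp
    simp_rw [hgi]
    rw [Finset.prod_ite_mem Finset.univ s, Finset.univ_inter, Finset.prod_const]
  have hmar := mul_meas_ge_le_integral_of_nonneg (μ := ν)
    (f := fun x => Real.exp (θ * ∑ i ∈ s, x i ^ 2))
    (ae_of_all _ fun x => (Real.exp_pos _).le) hFint (Real.exp c)
  rw [hFval] at hmar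
  have hseteq : {x : Fin n → ℝ | c ≤ θ * ∑ i ∈ s, x i ^ 2}
      = {x : Fin n → ℝ | Real.exp c ≤ Real.exp (θ * ∑ i ∈ s, x i ^ 2)} := by
    ext x; simp [Real.exp_le_exp]
  have hMpos : (0:ℝ) < 1 - 2*θ := by linarith
  have hMexp : M ^ s.card = Real.exp (-(s.card:ℝ)/2 * Real.log (1-2*θ)) := by
    rw [← Real.exp_log (show (0:ℝ) < M ^ s.card by positivity), Real.log_pow, hM,
      Real.log_inv, Real.log_sqrt hMpos.le]
    ring_nf
  rw [hseteq]
  have h2 := mul_le_mul_of_nonneg_left hmar (Real.exp_pos (-c)).le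
  rw [← mul_assoc, ← Real.exp_add] at h2
  simp only [neg_add_cancel, Real.exp_zero, one_mul] at h2
  rw [← hMexp]
  exact h2

set_option maxHeartbeats 2000000 in
/-- **Supplementary Lemma (concentration of the block-diagonal Gaussian quadratic
form `wᵀΛ'w/n`).**  The block-diagonal matrix `Λ' = diag{(1−ρ₁)I_{n₁},…,(1−ρ_K)I_{n_K}}`
is encoded via a monotone block assignment `b : Fin n → Fin K` whose fiber over `k`
has cardinality `n_k`. -/
theorem block_diagonal_gaussian_quadratic_form_concentration :
    ∃ ct₆ > (0 : ℝ),
      ∀ (K : ℕ), 1 ≤ K →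
      ∀ (ρ : Fin K → ℝ), (∀ k, ρ k ∈ Set.Ico (0 : ℝ) 1) →
      ∀ (r : Fin K → ℝ), (∀ k, r k ∈ Set.Ioc (0 : ℝ) 1) → (∑ k, r k = 1) →
      ∀ (n : ℕ) (nk : Fin K → ℕ), (∀ k, 1 ≤ nk k) → (∑ k, nk k = n) →
        (∀ k, |(nk k : ℝ) / n - r k| ≤ 1 / Real.sqrt n) →
      ∀ (b : Fin n → Fin K), Monotone b →
        (∀ k, (Finset.univ.filter (fun i => b i = k)).card = nk k) →
      ∀ (Λ' : Matrix (Fin n) (Fin n) ℝ),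
        Λ' = Matrix.diagonal (fun i => 1 - ρ (b i)) →
      ∀ (Ω : Type) (_ : MeasurableSpace Ω) (μ : Measure Ω), IsProbabilityMeasure μ →
      ∀ (w : Ω → Fin n → ℝ), Measurable w →
        Measure.map w μ = Measure.pi (fun _ : Fin n => gaussianReal 0 1) →
      (4 / (⨅ k, r k)) ^ 2 ≤ (n : ℝ) →
      (μ {ω | (1 / 2) * ∑ k, r k * (1 - ρ k) <
          |(w ω) ⬝ᵥ (Λ'.mulVec (w ω)) / n - ∑ k, r k * (1 - ρ k)|}).toReal ≤
        2 * K * Real.exp (-ct₆ * (⨅ k, r k) * n) := by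
  classical
  -- numeric log bounds
  have hlog1 : Real.log (5/4) < 6/25 := by
    rw [Real.log_lt_iff_lt_exp (by norm_num)]
    have h := Real.add_one_le_exp (3/25 : ℝ)
    have h2 : ((28:ℝ)/25)^2 ≤ (Real.exp (3/25))^2 :=
      pow_le_pow_left₀ (by norm_num) (by linarith) 2
    have h3 : (Real.exp (3/25))^2 = Real.exp (6/25) := by
      rw [sq, ← Real.exp_add]; norm_num
    nlinarith [h2, h3]
  have hlog2 : 8/25 < Real.log (7/5) := by
    rw [Real.lt_log_iff_exp_lt (by norm_num)]
    have h1 : (23:ℝ)/25 ≤ Real.exp (-(2/25)) := by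
      have := Real.add_one_le_exp (-(2/25) : ℝ); linarith
    have hinv : Real.exp (-(2/25)) * Real.exp (2/25) = 1 := by
      rw [← Real.exp_add]; norm_num
    have h2 : Real.exp (2/25) ≤ 25/23 := by nlinarith [Real.exp_pos (2/25)]
    have h4 : Real.exp (8/25) = (Real.exp (2/25))^4 := by
      rw [show (8:ℝ)/25 = 2/25 + (2/25 + (2/25 + 2/25)) by norm_num,
        Real.exp_add, Real.exp_add, Real.exp_add]; ring
    have h5 : (Real.exp (2/25))^4 ≤ ((25:ℝ)/23)^4 :=
      pow_le_pow_left₀ (Real.exp_pos _).le h2 4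
    nlinarith [h4, h5]
  set cup : ℝ := 3/25 - Real.log (5/4) / 2 with hcup
  set clo : ℝ := Real.log (7/5) / 2 - 4/25 with hclo
  have hcuppos : 0 < cup := by rw [hcup]; linarith
  have hclopos : 0 < clo := by rw [hclo]; linarith
  have hminpos : 0 < min cup clo := lt_min hcuppos hclopos
  refine ⟨3/4 * min cup clo, by linarith, ?_⟩
  intro K hK ρ hρ r hr hrsum n nk hnk1 hnksum hnkr b hbmono hbcard Λ' hΛ' Ω mΩ μ hμ w hw hmap hn
  haveI : Nonempty (Fin K) := ⟨⟨0, hK⟩⟩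
  obtain ⟨k₀, hk₀⟩ := Finite.exists_min r
  set rmin := ⨅ k, r k with hrmindef
  have hrminEq : rmin = r k₀ :=
    le_antisymm (ciInf_le (Set.Finite.bddBelow (Set.finite_range r)) k₀) (le_ciInf hk₀)
  have hrminpos : 0 < rmin := by rw [hrminEq]; exact (hr k₀).1
  have hrminle : ∀ k, rmin ≤ r k := fun k => by rw [hrminEq]; exact hk₀ k
  have hn0 : 0 < n := by
    rw [← hnksum]
    exact Finset.sum_pos (fun k _ => hnk1 k) ⟨k₀, Finset.mem_univ k₀⟩
  have hnR : (0:ℝ) < n := Nat.cast_pos.2 hn0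
  have hsq : 4 / rmin ≤ Real.sqrt n := by
    have := Real.sqrt_le_sqrt hn
    rwa [Real.sqrt_sq (by positivity)] at this
  have hsqpos : 0 < Real.sqrt n := Real.sqrt_pos.2 hnR
  have hid : rmin * (4 / rmin) = 4 := by field_simp
  have hinvsq : 1 / Real.sqrt n ≤ rmin / 4 := by
    rw [div_le_div_iff₀ hsqpos (by norm_num)]
    nlinarith [mul_le_mul_of_nonneg_left hsq hrminpos.le]
  have hdev : ∀ k, |(nk k : ℝ)/n - r k| ≤ r k / 4 := by
    intro k
    refine le_trans (le_trans (hnkr k) hinvsq) ?_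
    nlinarith [hrminle k]
  have hNkUp : ∀ k, (nk k : ℝ) ≤ 5/4 * r k * n := by
    intro k
    have h := (abs_le.1 (hdev k)).2
    have h2 : (nk k:ℝ)/n ≤ 5/4 * r k := by linarith
    have h3 : (nk k:ℝ) = ((nk k:ℝ)/n) * n := by field_simp
    nlinarith
  have hNkLo : ∀ k, 3/4 * r k * n ≤ (nk k : ℝ) := by
    intro k
    have h := (abs_le.1 (hdev k)).1
    have h2 : 3/4 * r k ≤ (nk k:ℝ)/n := by linarith
    have h3 : (nk k:ℝ) = ((nk k:ℝ)/n) * n := by field_simp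
    nlinarith
  have hNkLo2 : ∀ k, 3/4 * rmin * n ≤ (nk k : ℝ) := by
    intro k
    refine le_trans ?_ (hNkLo k)
    nlinarith [hrminle k]
  -- setup
  set γ := gaussianReal 0 1 with hγdef
  set ν := Measure.pi fun _ : Fin n => γ with hνdef
  haveI : IsProbabilityMeasure ν := by rw [hνdef]; infer_instance
  set sk : Fin K → Finset (Fin n) := fun k => Finset.univ.filter (fun i => b i = k) with hskdef
  set m := ∑ k, r k * (1 - ρ k) with hmdef
  set Ap : Fin K → Set (Fin n → ℝ) := fun k =>
    {x | ((nk k:ℝ) + n * r k / 4)/10 ≤ (1/10) * ∑ i ∈ sk k, x i ^ 2} with hApdef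
  set Am : Fin K → Set (Fin n → ℝ) := fun k =>
    {x | -(((nk k:ℝ) - n * r k / 4)/5) ≤ (-(1/5)) * ∑ i ∈ sk k, x i ^ 2} with hAmdef
  have hQ : ∀ x : Fin n → ℝ, x ⬝ᵥ Λ'.mulVec x = ∑ i, (1 - ρ (b i)) * x i ^ 2 := by
    intro x
    rw [hΛ']
    simp only [dotProduct, Matrix.mulVec_diagonal]
    exact Finset.sum_congr rfl fun i _ => by ring
  have hsplit : ∀ x : Fin n → ℝ,
      ∑ i, (1 - ρ (b i)) * x i ^ 2 = ∑ k, (1 - ρ k) * ∑ i ∈ sk k, x i ^ 2 := by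
    intro x
    rw [← Finset.sum_fiberwise Finset.univ b (fun i => (1 - ρ (b i)) * x i ^ 2)]
    refine Finset.sum_congr rfl fun k _ => ?_
    rw [Finset.mul_sum]
    refine Finset.sum_congr rfl fun i hi => ?_
    have hbi : b i = k := by simpa using (Finset.mem_filter.1 hi).2
    rw [hbi]
  set B := {x : Fin n → ℝ | (1/2) * m < |(∑ i, (1 - ρ (b i)) * x i ^ 2)/(n:ℝ) - m|} with hBdef
  have hBmeas : MeasurableSet B := by
    apply measurableSet_lt measurable_const
    apply Measurable.abs
    apply Measurable.sub _ measurable_const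
    apply Measurable.div_const
    exact Finset.measurable_sum _ fun i _ => ((measurable_pi_apply i).pow_const 2).const_mul _
  have hev : {ω | (1/2) * m < |(w ω) ⬝ᵥ (Λ'.mulVec (w ω)) / (n:ℝ) - m|} = w ⁻¹' B := by
    ext ω
    simp only [Set.mem_setOf_eq, Set.mem_preimage, hBdef, hQ (w ω)]
  -- inclusion into union of tail events
  have hincl : B ⊆ ⋃ k, Ap k ∪ Am k := by
    intro x hx
    by_contra hnot
    simp only [Set.mem_iUnion, Set.mem_union, not_exists, not_or] at hnot
    have hFb : ∀ k, |(∑ i ∈ sk k, x i ^ 2) - (nk k:ℝ)| ≤ n * r k / 4 := by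
      intro k
      obtain ⟨h1, h2⟩ := hnot k
      simp only [hApdef, Set.mem_setOf_eq, not_le] at h1
      simp only [hAmdef, Set.mem_setOf_eq, not_le] at h2
      rw [abs_le]
      constructor <;> nlinarith
    rw [hBdef, Set.mem_setOf_eq] at hx
    have hsum : (∑ i, (1 - ρ (b i)) * x i ^ 2)/(n:ℝ) - m
        = ∑ k, ((1 - ρ k) * ((∑ i ∈ sk k, x i ^ 2) / n - r k)) := by
      rw [hsplit x, hmdef, Finset.sum_div, ← Finset.sum_sub_distrib]
      exact Finset.sum_congr rfl fun k _ => by ring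
    have habs : |∑ k, ((1 - ρ k) * ((∑ i ∈ sk k, x i ^ 2) / n - r k))|
        ≤ ∑ k, (1 - ρ k) * (r k / 2) := by
      refine le_trans (Finset.abs_sum_le_sum_abs _ _) (Finset.sum_le_sum fun k _ => ?_)
      have hρk : (0:ℝ) ≤ 1 - ρ k := by have := (hρ k).2; linarith
      rw [abs_mul, abs_of_nonneg hρk]
      have h1 : |(∑ i ∈ sk k, x i ^ 2)/(n:ℝ) - (nk k:ℝ)/n| ≤ r k / 4 := by
        rw [div_sub_div_same, abs_div, abs_of_pos hnR, div_le_iff₀ hnR]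
        calc |(∑ i ∈ sk k, x i ^ 2) - (nk k:ℝ)| ≤ n * r k / 4 := hFb k
        _ = r k / 4 * n := by ring
      have h2 := hdev k
      have hterm : |(∑ i ∈ sk k, x i ^ 2) / (n:ℝ) - r k| ≤ r k / 2 := by
        calc |(∑ i ∈ sk k, x i ^ 2) / (n:ℝ) - r k|
            ≤ |(∑ i ∈ sk k, x i ^ 2)/(n:ℝ) - (nk k:ℝ)/n| + |(nk k:ℝ)/n - r k| :=
          abs_sub_le _ _ _
        _ ≤ r k/4 + r k/4 := add_le_add h1 h2
        _ = r k/2 := by ring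
      exact mul_le_mul_of_nonneg_left hterm hρk
    have hmsum : ∑ k, (1 - ρ k) * (r k / 2) = m/2 := by
      rw [hmdef, Finset.sum_div]
      exact Finset.sum_congr rfl fun k _ => by ring
    rw [hsum] at hx
    rw [hmsum] at habs
    linarith
  -- per-block Chernoff bounds
  set e := Real.exp (-(3/4 * min cup clo) * rmin * n) with hedef
  have hcard : ∀ k, (sk k).card = nk k := fun k => hbcard k
  have htailp : ∀ k, (ν (Ap k)).toReal ≤ e := by
    intro k
    have hch := chernoff_tail (n := n) (sk k) (θ := 1/10) (by norm_num)
      (((nk k:ℝ) + n * r k / 4)/10)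
    rw [hcard k] at hch
    refine le_trans hch ?_
    rw [← Real.exp_add, hedef, Real.exp_le_exp]
    have hlg : Real.log (1 - 2 * (1/10) : ℝ) = -Real.log (5/4) := by
      rw [show (1 - 2 * (1/10) : ℝ) = (5/4)⁻¹ by norm_num, Real.log_inv]
    rw [hlg]
    have hmin := min_le_left cup clo
    have hprd := mul_le_mul_of_nonneg_left (hNkLo2 k) hcuppos.le
    have hprd2 := mul_le_mul_of_nonneg_right hmin
      (show (0:ℝ) ≤ 3/4 * rmin * n by positivity)
    have hak := hNkUp k
    rw [hcup] at *
    nlinarith [hprd, hprd2, hak]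
  have htailm : ∀ k, (ν (Am k)).toReal ≤ e := by
    intro k
    have hch := chernoff_tail (n := n) (sk k) (θ := -(1/5)) (by norm_num)
      (-(((nk k:ℝ) - n * r k / 4)/5))
    rw [hcard k] at hch
    refine le_trans hch ?_
    rw [← Real.exp_add, hedef, Real.exp_le_exp]
    have hlg : Real.log (1 - 2 * (-(1/5)) : ℝ) = Real.log (7/5) := by norm_num
    rw [hlg]
    have hmin := min_le_right cup clo
    have hprd := mul_le_mul_of_nonneg_left (hNkLo2 k) hclopos.le
    have hprd2 := mul_le_mul_of_nonneg_right hmin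
      (show (0:ℝ) ≤ 3/4 * rmin * n by positivity)
    have hak := hNkUp k
    rw [hclo] at *
    nlinarith [hprd, hprd2, hak]
  have hepos : 0 ≤ e := (Real.exp_pos _).le
  have hofp : ∀ k, ν (Ap k) ≤ ENNReal.ofReal e := by
    intro k
    rw [← ENNReal.ofReal_toReal (measure_ne_top ν (Ap k))]
    exact ENNReal.ofReal_le_ofReal (htailp k)
  have hofm : ∀ k, ν (Am k) ≤ ENNReal.ofReal e := by
    intro k
    rw [← ENNReal.ofReal_toReal (measure_ne_top ν (Am k))]
    exact ENNReal.ofReal_le_ofReal (htailm k)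
  have hub : ν B ≤ ENNReal.ofReal (2 * K * e) := by
    calc ν B ≤ ν (⋃ k, Ap k ∪ Am k) := measure_mono hincl
    _ ≤ ∑ k, ν (Ap k ∪ Am k) := measure_iUnion_fintype_le _ _
    _ ≤ ∑ k : Fin K, (ENNReal.ofReal e + ENNReal.ofReal e) :=
        Finset.sum_le_sum fun k _ =>
          le_trans (measure_union_le _ _) (add_le_add (hofp k) (hofm k))
    _ = (K : ℝ≥0∞) * (ENNReal.ofReal e + ENNReal.ofReal e) := by
        rw [Finset.sum_const, Finset.card_univ, Fintype.card_fin, nsmul_eq_mul]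
    _ = ENNReal.ofReal (2 * K * e) := by
        rw [← ENNReal.ofReal_add hepos hepos, ← ENNReal.ofReal_natCast K,
          ← ENNReal.ofReal_mul (by positivity)]
        congr 1
        ring
  have hμν : μ {ω | (1/2) * m < |(w ω) ⬝ᵥ (Λ'.mulVec (w ω)) / (n:ℝ) - m|} = ν B := by
    rw [hev, ← hmap, Measure.map_apply hw hBmeas]
  rw [hμν]
  calc (ν B).toReal ≤ (ENNReal.ofReal (2 * K * e)).toReal :=
      ENNReal.toReal_mono ENNReal.ofReal_ne_top hub
  _ = 2 * K * e := ENNReal.toReal_ofReal (by positivity)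
end

section
/- Power gain of the t test from correlated errors for small signals (Supplementary Lemma, part 1): Let α ∈ (0,1) and z_α = Φ^{−1}(1−α). For every ρ ∈ (0,1) and every h with 0 < h ≤ (1/2)·√(1−ρ)·(z_α + √(z_α² + 12)), one has Δπ(h, ρ) > 0, i.e. E[Φ(h·(ρT + 1 − ρ)^{−1/2} − z_α)] > Φ(h − z_α), where T is a chi-squared random variable with 1 degree of freedom. -/
open MeasureTheory ProbabilityTheory Filter

/-- Standard normal cumulative distribution function `Φ`. -/
noncomputable def stdGaussCDF (t : ℝ) : ℝ :=
  ((gaussianReal 0 1) (Set.Iic t)).toReal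

/-!
Write `g t = Φ(h / √(ρ t + 1 - ρ) - z)` and `T = X²` with `X ~ N(0,1)`. Since `E T = 1` and
`g 1 = Φ(h - z)`, the claim is `g (E T) < E (g T)`: strict Jensen, once `g` is strictly convex
on `[0, ∞)` (`T` is not a.s. constant). With `r t = (ρ t + 1 - ρ)^(-1/2)` and `u = h r - z`,
`g'' = φ(u) (u'' - u u'²) = φ(u) (h ρ² / 4) r⁵ (3 + z (h r) - (h r)²)`. The quadratic factor is
positive while `h r` stays below its positive root `(z + √(z² + 12)) / 2`, and for `t > 0` we have
`r t < 1 / √(1 - ρ)`, so the smallness assumption on `h` is exactly what is needed.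
-/

open Real Set Topology

lemma stdGaussCDF_eq_cdf : stdGaussCDF = cdf (gaussianReal 0 1) := by
  ext t
  rw [cdf_eq_real, measureReal_def, stdGaussCDF]

lemma integrable_stdGaussCDF_comp {α : Type*} [MeasurableSpace α] {μ : Measure α}
    [IsFiniteMeasure μ] {f : α → ℝ} (hf : Measurable f) :
    Integrable (fun x ↦ stdGaussCDF (f x)) μ := by
  rw [stdGaussCDF_eq_cdf]
  refine Integrable.of_bound ((monotone_cdf _).measurable.comp hf).aestronglyMeasurable 1
    (ae_of_all _ fun x ↦ ?_)
  rw [norm_of_nonneg (cdf_nonneg _ _)]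
  exact cdf_le_one _ _

lemma hasDerivAt_gaussianPDFReal (μ : ℝ) (v : NNReal) (x : ℝ) :
    HasDerivAt (gaussianPDFReal μ v) (-((x - μ) / v) * gaussianPDFReal μ v x) x := by
  have hexp : HasDerivAt (fun y ↦ -(y - μ) ^ 2 / (2 * v)) (-((x - μ) / v)) x := by
    refine ((((hasDerivAt_id' x).sub_const μ).fun_pow 2).neg.div_const (2 * (v : ℝ))).congr_deriv ?_
    ring
  rw [gaussianPDFReal_def]
  exact (hexp.exp.const_mul (√(2 * π * v))⁻¹).congr_deriv (by ring)

lemma hasDerivAt_stdGaussCDF (t : ℝ) : HasDerivAt stdGaussCDF (gaussianPDFReal 0 1 t) t := by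
  have hint := integrable_gaussianPDFReal 0 1
  have hcont : Continuous (gaussianPDFReal 0 1) := by rw [gaussianPDFReal_def]; fun_prop
  have hsplit : stdGaussCDF = fun s ↦ (∫ x in Iic 0, gaussianPDFReal 0 1 x) +
      ∫ x in (0 : ℝ)..s, gaussianPDFReal 0 1 x := by
    ext s
    rw [← intervalIntegral.integral_Iic_sub_Iic hint.integrableOn hint.integrableOn,
      add_sub_cancel, stdGaussCDF, gaussianReal_apply_eq_integral 0 one_ne_zero,
      ENNReal.toReal_ofReal
        (setIntegral_nonneg measurableSet_Iic fun x _ ↦ gaussianPDFReal_nonneg 0 1 x)]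
  rw [hsplit]
  exact (intervalIntegral.integral_hasDerivAt_right hint.intervalIntegrable
    hcont.stronglyMeasurable.stronglyMeasurableAtFilter hcont.continuousAt).const_add _

lemma continuous_stdGaussCDF : Continuous stdGaussCDF :=
  continuous_iff_continuousAt.2 fun t ↦ (hasDerivAt_stdGaussCDF t).continuousAt

lemma deriv2_stdGaussCDF_comp {u u' : ℝ → ℝ} {x u'' : ℝ}
    (hu : ∀ᶠ y in 𝓝 x, HasDerivAt u (u' y) y) (hu' : HasDerivAt u' u'' x) :
    deriv^[2] (fun y ↦ stdGaussCDF (u y)) x =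
      gaussianPDFReal 0 1 (u x) * (u'' - u x * u' x ^ 2) := by
  have hd : deriv (fun y ↦ stdGaussCDF (u y)) =ᶠ[𝓝 x]
      fun y ↦ gaussianPDFReal 0 1 (u y) * u' y :=
    hu.mono fun y hy ↦ ((hasDerivAt_stdGaussCDF (u y)).comp y hy).deriv
  have hpdf : HasDerivAt (fun y ↦ gaussianPDFReal 0 1 (u y))
      (-(u x) * gaussianPDFReal 0 1 (u x) * u' x) x :=
    ((hasDerivAt_gaussianPDFReal 0 1 (u x)).comp x hu.self_of_nhds).congr_deriv (by simp)
  show deriv (deriv _) x = _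
  rw [hd.deriv_eq, (hpdf.fun_mul hu').deriv]
  ring

lemma integral_sq_gaussianReal (μ : ℝ) (v : NNReal) :
    ∫ x, x ^ 2 ∂gaussianReal μ v = μ ^ 2 + v := by
  have h := variance_eq_sub (memLp_id_gaussianReal (μ := μ) (v := v) 2)
  simp only [variance_id_gaussianReal, id, Pi.pow_apply, integral_id_gaussianReal] at h
  linarith

lemma StrictConvexOn.map_integral_sq_lt {μ : Measure ℝ} [IsProbabilityMeasure μ]
    [NullSingletonClass μ] {g : ℝ → ℝ} (hg : StrictConvexOn ℝ (Ici 0) g)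
    (hgc : ContinuousOn g (Ici 0)) (hsq : Integrable (fun x ↦ x ^ 2) μ)
    (hgi : Integrable (fun x ↦ g (x ^ 2)) μ) :
    g (∫ x, x ^ 2 ∂μ) < ∫ x, g (x ^ 2) ∂μ := by
  rcases hg.ae_eq_const_or_map_average_lt hgc isClosed_Ici
    (ae_of_all _ fun x ↦ sq_nonneg x) hsq hgi with hconst | hlt
  · -- `x ^ 2 = c` forces `x = ±√c`, a null set
    set c := ⨍ x, x ^ 2 ∂μ
    have hfin : ({√c, -√c} : Set ℝ).Finite := toFinite _
    obtain ⟨x, hxc, hx⟩ :=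
      (hconst.and (measure_eq_zero_iff_ae_notMem.1 (hfin.measure_zero μ))).exists
    refine absurd ?_ hx
    have habs : |x| = √c := by rw [← sqrt_sq_eq_abs]; exact congrArg sqrt hxc
    exact (abs_eq (sqrt_nonneg c)).1 habs
  · simpa only [average_eq_integral] using hlt

section InvSqrtAffine

variable {a c t : ℝ}

lemma hasDerivAt_inv_sqrt_affine (ht : 0 < a * t + c) :
    HasDerivAt (fun y ↦ (√(a * y + c))⁻¹) (-(a / 2) * (√(a * t + c))⁻¹ ^ 3) t := by
  have hs : HasDerivAt (fun y ↦ a * y + c) a t :=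
    (((hasDerivAt_id' t).const_mul a).add_const c).congr_deriv (mul_one a)
  have hq := (hs.sqrt ht.ne').inv (sqrt_pos.2 ht).ne'
  refine hq.congr_deriv ?_
  have : √(a * t + c) ≠ 0 := (sqrt_pos.2 ht).ne'
  field_simp

lemma hasDerivAt_inv_sqrt_affine_pow_three (ht : 0 < a * t + c) :
    HasDerivAt (fun y ↦ (√(a * y + c))⁻¹ ^ 3) (-(3 * a / 2) * (√(a * t + c))⁻¹ ^ 5) t :=
  ((hasDerivAt_inv_sqrt_affine ht).fun_pow 3).congr_deriv (by push_cast; ring)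

end InvSqrtAffine

lemma add_mul_sub_sq_pos {c z y : ℝ} (hc : 0 < c) (hy0 : 0 ≤ y)
    (hy : y < (z + √(z ^ 2 + 4 * c)) / 2) : 0 < c + z * y - y ^ 2 := by
  set w := √(z ^ 2 + 4 * c)
  have hw : w ^ 2 = z ^ 2 + 4 * c := sq_sqrt (by positivity)
  have hzw : z < w := (le_abs_self z).trans_lt <| by
    rw [← sqrt_sq_eq_abs]; exact sqrt_lt_sqrt (sq_nonneg z) (by linarith)
  nlinarith [mul_pos (sub_pos.2 hy) (by linarith : 0 < y - (z - w) / 2)]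

/-- Rejection probability given `T = t`, so that `π(h, ρ) = E[condPower z_α ρ h T]`. -/
noncomputable def condPower (z ρ h t : ℝ) : ℝ := stdGaussCDF (h / √(ρ * t + 1 - ρ) - z)

section CondPower

variable {z ρ h : ℝ}

lemma continuousOn_condPower (hρ0 : 0 ≤ ρ) (hρ1 : ρ < 1) :
    ContinuousOn (condPower z ρ h) (Ici 0) := by
  refine continuous_stdGaussCDF.comp_continuousOn <|
    (continuousOn_const.div (by fun_prop) fun t ht ↦ ?_).sub continuousOn_const
  exact (sqrt_pos.2 (by nlinarith [mem_Ici.1 ht])).ne'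

lemma strictConvexOn_condPower (hρ0 : 0 < ρ) (hρ1 : ρ < 1) (hh : 0 < h)
    (hsmall : h ≤ (1 / 2) * √(1 - ρ) * (z + √(z ^ 2 + 12))) :
    StrictConvexOn ℝ (Ici 0) (condPower z ρ h) := by
  set r : ℝ → ℝ := fun y ↦ (√(ρ * y + (1 - ρ)))⁻¹
  have hfun : condPower z ρ h = fun y ↦ stdGaussCDF (h * r y - z) := by
    ext y; simp only [condPower, r, div_eq_mul_inv, add_sub_assoc]
  refine strictConvexOn_of_deriv2_pos (convex_Ici 0) (continuousOn_condPower hρ0.le hρ1)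
    fun t ht ↦ ?_
  rw [interior_Ici, mem_Ioi] at ht
  have hst : 0 < ρ * t + (1 - ρ) := by nlinarith
  have hnear : ∀ᶠ y in 𝓝 t, 0 < ρ * y + (1 - ρ) :=
    continuousAt_const.eventually_lt (f := fun _ ↦ 0) (by fun_prop) hst
  have hu : ∀ᶠ y in 𝓝 t, HasDerivAt (fun y ↦ h * r y - z) (h * (-(ρ / 2) * r y ^ 3)) y :=
    hnear.mono fun y hy ↦ ((hasDerivAt_inv_sqrt_affine hy).const_mul h).sub_const z
  have hu' := ((hasDerivAt_inv_sqrt_affine_pow_three hst).const_mul (-(ρ / 2))).const_mul h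
  rw [hfun, deriv2_stdGaussCDF_comp hu hu']
  have hr : 0 < r t := inv_pos.2 (sqrt_pos.2 hst)
  have hhr : h * r t < (z + √(z ^ 2 + 12)) / 2 := by
    have hb : 0 < √(1 - ρ) := sqrt_pos.2 (by linarith)
    have hrb : r t < (√(1 - ρ))⁻¹ :=
      inv_strictAnti₀ hb (sqrt_lt_sqrt (by linarith) (by nlinarith))
    calc h * r t < h * (√(1 - ρ))⁻¹ := mul_lt_mul_of_pos_left hrb hh
      _ ≤ (z + √(z ^ 2 + 12)) / 2 := by
        rw [← div_eq_mul_inv, div_le_iff₀ hb]; linarith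
  have hquad : 0 < 3 + z * (h * r t) - (h * r t) ^ 2 :=
    add_mul_sub_sq_pos (by norm_num) (mul_pos hh hr).le (by rwa [show (4 : ℝ) * 3 = 12 by norm_num])
  have hpdf := gaussianPDFReal_pos 0 1 (h * r t - z) one_ne_zero
  have hfactor : h * (-(ρ / 2) * (-(3 * ρ / 2) * r t ^ 5)) -
      (h * r t - z) * (h * (-(ρ / 2) * r t ^ 3)) ^ 2 =
      h * ρ ^ 2 / 4 * r t ^ 5 * (3 + z * (h * r t) - (h * r t) ^ 2) := by ring
  rw [hfactor]
  exact mul_pos hpdf (mul_pos (by positivity) hquad)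

end CondPower

theorem power_gain_small_signal_general
    (zα : ℝ)
    (ρ : ℝ) (hρ : ρ ∈ Set.Ioo (0 : ℝ) 1)
    (h : ℝ) (hpos : 0 < h)
    (hsmall : h ≤ (1 / 2) * Real.sqrt (1 - ρ) * (zα + Real.sqrt (zα ^ 2 + 12))) :
    stdGaussCDF (h - zα) <
      ∫ x, stdGaussCDF (h / Real.sqrt (ρ * x ^ 2 + 1 - ρ) - zα) ∂(gaussianReal 0 1) := by
  obtain ⟨hρ0, hρ1⟩ := hρ
  have : NullSingletonClass (gaussianReal 0 1) :=
    nullSingletonClass_gaussianReal (μ := 0) one_ne_zero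
  have hjensen := (strictConvexOn_condPower hρ0 hρ1 hpos hsmall).map_integral_sq_lt
    (continuousOn_condPower hρ0.le hρ1) (memLp_id_gaussianReal (μ := 0) (v := 1) 2).integrable_sq
    (integrable_stdGaussCDF_comp (by fun_prop))
  have hone : condPower zα ρ h (0 ^ 2 + 1) = stdGaussCDF (h - zα) := by simp [condPower]
  rwa [integral_sq_gaussianReal, NNReal.coe_one, hone] at hjensen

/-- **Supplementary Lemma, part 1 (power gain from correlated errors for small
signals):** for `0 < h ≤ (1/2)·√(1−ρ)·(z_α + √(z_α² + 12))` one has `Δπ(h,ρ) > 0`,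
i.e. `E[Φ(h·(ρT + 1 − ρ)^{−1/2} − z_α)] > Φ(h − z_α)` where `T ~ χ²₁` is realized as
the square of a standard normal random variable. -/
theorem power_gain_small_signal
    (α : ℝ) (hα : α ∈ Set.Ioo (0 : ℝ) 1)
    (zα : ℝ) (hzα : stdGaussCDF zα = 1 - α)
    (ρ : ℝ) (hρ : ρ ∈ Set.Ioo (0 : ℝ) 1)
    (h : ℝ) (hpos : 0 < h)
    (hsmall : h ≤ (1 / 2) * Real.sqrt (1 - ρ) * (zα + Real.sqrt (zα ^ 2 + 12))) :
    stdGaussCDF (h - zα) <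
      ∫ x, stdGaussCDF (h / Real.sqrt (ρ * x ^ 2 + 1 - ρ) - zα) ∂(gaussianReal 0 1) :=
  power_gain_small_signal_general zα ρ hρ h hpos hsmall
end
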